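/- arXiv:2112.12730 — 2 statements merged into one kernel-verified Lean document; each statement's English description precedes it below -/
import Mathlib

section
/- Projection Theorem (Theorem 3.2, Hilbert-space form). Assume Hypothesis (SL). Then for every n ∈ ℤ^D with n ≠ 0, the set of speeds { v ∈ ℝ \ {0} : there exists ψ ∈ H, ψ ≠ 0, with ⟨Ω, ψ⟩ = 0 and U(n, ‖n‖₁/v)ψ = ψ } is countable; in particular it has Lebesgue measure zero, so for almost every v the subspace of vectors invariant under U(n, ‖n‖₁/v) is exactly the scalar multiples of Ω. -/
/-!
Let `ψ ⊥ Ω` be fixed by `U (n, t)` and `φ` by `U (n, t')` with `t ≠ t'`. By the mean ergodic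
theorem for `U (0, t - t')`, the projection `Q` of `φ` onto the vectors fixed by `U (0, t - t')`
satisfies `⟪ψ, Q⟫ = ⟪ψ, φ⟫` and is fixed by the whole lattice generated by `(n, t)` and `(n, t')`.
That lattice contains a space-like point, so `Q ∈ ℂ ∙ Ω` by (SL) and `⟪ψ, φ⟫ = 0`. Hence for
distinct times the fixed vectors orthogonal to `Ω` form mutually orthogonal subspaces, and in a
separable Hilbert space only countably many of them can be nonzero.
-/

open Filter MeasureTheory Topology

noncomputable def l1 {D : ℕ} (n : Fin D → ℤ) : ℝ := ∑ i, |(n i : ℝ)|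

variable {D : ℕ} {H : Type*} [NormedAddCommGroup H] [InnerProductSpace ℂ H]
  [CompleteSpace H] [TopologicalSpace.SeparableSpace H]

open scoped InnerProductSpace

-- The Birkhoff averages of `x` converge to the projection and `g` is constant on them.
theorem ContinuousLinearMap.map_orthogonalProjectionOnto_eqLocus_one {𝕜 E F : Type*} [RCLike 𝕜]
    [NormedAddCommGroup E] [InnerProductSpace 𝕜 E] [CompleteSpace E] [NormedAddCommGroup F]
    [NormedSpace 𝕜 F] (T : E →L[𝕜] E)
    (hT : ‖T‖ ≤ 1) (g : E →L[𝕜] F) {x : E} (hx : ∀ k, g (T^[k] x) = g x) :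
    g ((T.eqLocus (1 : E →L[𝕜] E)).orthogonalProjectionOnto x) = g x := by
  refine tendsto_nhds_unique ((g.continuous.tendsto _).comp
    (T.tendsto_birkhoffAverage_orthogonalProjection hT x)) (tendsto_const_nhds.congr' ?_)
  filter_upwards [eventually_ne_atTop 0] with N hN
  rw [Function.comp_apply, map_birkhoffAverage 𝕜 𝕜 g]
  simp only [birkhoffAverage, birkhoffSum, Function.comp_apply, id_eq, hx, Finset.sum_const,
    Finset.card_range]
  rw [← Nat.cast_smul_eq_nsmul 𝕜, inv_smul_smul₀ (Nat.cast_ne_zero.2 hN)]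

theorem Submodule.countable_setOf_ne_bot_of_pairwise_isOrtho {𝕜 E ι : Type*} [RCLike 𝕜]
    [NormedAddCommGroup E] [InnerProductSpace 𝕜 E] [TopologicalSpace.SeparableSpace E]
    {V : ι → Submodule 𝕜 E} (hV : Pairwise fun i j => V i ⟂ V j) :
    {i | V i ≠ ⊥}.Countable := by
  choose! x hxV hx0 using fun i (hi : V i ≠ ⊥) => Submodule.exists_mem_ne_zero_of_ne_bot hi
  refine Set.PairwiseDisjoint.countable_of_isOpen (s := fun i => Metric.ball (x i) (‖x i‖ / 2))
    (fun i hi j hj hij => Metric.ball_disjoint_ball ?_) (fun _ _ => Metric.isOpen_ball)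
    (fun i hi => ⟨x i, Metric.mem_ball_self (by simpa using hx0 i hi)⟩)
  have horth : ⟪x i, x j⟫_𝕜 = 0 :=
    Submodule.isOrtho_iff_inner_eq.1 (hV hij) _ (hxV i hi) _ (hxV j hj)
  have hdist : dist (x i) (x j) ^ 2 = ‖x i‖ ^ 2 + ‖x j‖ ^ 2 := by
    simp [dist_eq_norm, @norm_sub_sq 𝕜, horth]
  nlinarith [dist_nonneg (x := x i) (y := x j), norm_nonneg (x i), norm_nonneg (x j),
    sq_nonneg (‖x i‖ - ‖x j‖)]

theorem Submodule.eq_of_le_of_orthogonal_inf_eq_bot {𝕜 E : Type*} [RCLike 𝕜]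
    [NormedAddCommGroup E] [InnerProductSpace 𝕜 E] {K V : Submodule 𝕜 E}
    [K.HasOrthogonalProjection] (hKV : K ≤ V) (h : Kᗮ ⊓ V = ⊥) : V = K := by
  rw [← Submodule.sup_orthogonal_inf_of_hasOrthogonalProjection hKV, h, sup_bot_eq]

namespace UnitaryRep

variable {𝕜 E G : Type*} [RCLike 𝕜] [NormedAddCommGroup E] [InnerProductSpace 𝕜 E]
  [AddCommGroup G] {U : G → E ≃ₗᵢ[𝕜] E}

theorem map_add_apply (hU : ∀ p q, U (p + q) = (U q).trans (U p)) (p q : G) (x : E) :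
    U (p + q) x = U p (U q x) := by
  rw [hU]; rfl

theorem map_zero_apply (hU : ∀ p q, U (p + q) = (U q).trans (U p)) (x : E) : U 0 x = x :=
  (U 0).injective <| by rw [← map_add_apply hU, add_zero]

theorem apply_comm (hU : ∀ p q, U (p + q) = (U q).trans (U p)) (p q : G) (x : E) :
    U p (U q x) = U q (U p x) := by
  rw [← map_add_apply hU, add_comm, map_add_apply hU]

theorem iterate_apply (hU : ∀ p q, U (p + q) = (U q).trans (U p)) (p : G) (k : ℕ) (x : E) :
    (⇑(U p))^[k] x = U (k • p) x := by
  induction k with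
  | zero => rw [Function.iterate_zero_apply, zero_smul, map_zero_apply hU]
  | succ k ih => rw [Function.iterate_succ_apply', ih, succ_nsmul', map_add_apply hU]

def stabilizer (hU : ∀ p q, U (p + q) = (U q).trans (U p)) (x : E) : AddSubgroup G where
  carrier := {p | U p x = x}
  add_mem' {p q} hp hq := by
    simp only [Set.mem_ofPred_eq] at *
    rw [map_add_apply hU, hq, hp]
  zero_mem' := map_zero_apply hU x
  neg_mem' {p} hp := by
    simp only [Set.mem_ofPred_eq] at *
    conv_lhs => rw [← hp]
    rw [← map_add_apply hU, neg_add_cancel, map_zero_apply hU]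

theorem mem_stabilizer {hU : ∀ p q, U (p + q) = (U q).trans (U p)} {x : E} {p : G} :
    p ∈ stabilizer hU x ↔ U p x = x :=
  Iff.rfl

-- `Q` is the mean ergodic projection of `φ` onto the vectors fixed by `U (a - b)`. It is fixed
-- by `b` since `U b` commutes with `U (a - b)`, and the inner products with `ψ` are preserved
-- along the orbit because `⟪ψ, U (k • (a - b)) φ⟫ = ⟪U (k • a) ψ, U (k • a) φ⟫`.
theorem exists_closure_le_stabilizer_inner_eq [CompleteSpace E]
    (hU : ∀ p q, U (p + q) = (U q).trans (U p)) {a b : G} {ψ φ : E}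
    (hψ : U a ψ = ψ) (hφ : U b φ = φ) :
    ∃ Q : E, AddSubgroup.closure {a, b} ≤ stabilizer hU Q ∧ ⟪ψ, Q⟫_𝕜 = ⟪ψ, φ⟫_𝕜 := by
  set T : E →L[𝕜] E := (U (a - b)).toLinearIsometry.toContinuousLinearMap
  have hT : ‖T‖ ≤ 1 := LinearIsometry.norm_toContinuousLinearMap_le _
  have hiter (k : ℕ) (x : E) : T^[k] x = U (k • (a - b)) x := iterate_apply hU _ k x
  set Q : E := ((T.eqLocus (1 : E →L[𝕜] E)).orthogonalProjectionOnto φ : E)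
  refine ⟨Q, ?_, ?_⟩
  · have hab : a - b ∈ stabilizer hU Q :=
      ((T.eqLocus (1 : E →L[𝕜] E)).orthogonalProjectionOnto φ).2
    have hb : b ∈ stabilizer hU Q := by
      set g : E →L[𝕜] E := (U b).toLinearIsometry.toContinuousLinearMap - 1
      have hg (x : E) : g x = U b x - x := rfl
      have hgQ : g Q = g φ := T.map_orthogonalProjectionOnto_eqLocus_one hT g fun k => by
        rw [hg, hg, hiter, apply_comm hU, hφ, sub_self, sub_self]
      rwa [hg, hg, hφ, sub_self, sub_eq_zero] at hgQ
    rw [AddSubgroup.closure_le, Set.insert_subset_iff, Set.singleton_subset_iff]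
    exact ⟨by simpa using add_mem hab hb, hb⟩
  · refine T.map_orthogonalProjectionOnto_eqLocus_one hT (innerSL 𝕜 ψ) fun k => ?_
    have hψk : k • a ∈ stabilizer hU ψ := nsmul_mem (mem_stabilizer.2 hψ) k
    have hφk : -(k • b) ∈ stabilizer hU φ := neg_mem (nsmul_mem (mem_stabilizer.2 hφ) k)
    rw [innerSL_apply_apply, innerSL_apply_apply, hiter, smul_sub, sub_eq_add_neg,
      map_add_apply hU, hφk]
    conv_lhs => rw [← hψk]
    exact (U _).inner_map_map ψ φ

end UnitaryRep

theorem l1_pos {n : Fin D → ℤ} (hn : n ≠ 0) : 0 < l1 n := by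
  obtain ⟨i, hi⟩ := Function.ne_iff.1 hn
  exact Finset.sum_pos' (fun j _ => abs_nonneg _) ⟨i, Finset.mem_univ i, by simpa using hi⟩

theorem l1_nsmul (k : ℕ) (n : Fin D → ℤ) : l1 (k • n) = k * l1 n := by
  simp [l1, Finset.mul_sum, abs_mul]

/-- Subtracting a suitable multiple of `(0, t - t')` from `M • (n, t')` leaves a time of size at
most `|t - t'|`, while `l1 (M • n)` grows linearly in `M`. -/
theorem exists_mem_closure_pair_ne_zero_mul_abs_lt_l1 {n : Fin D → ℤ} (hn : n ≠ 0) {t t' : ℝ}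
    (htt' : t ≠ t') (c : ℝ) :
    ∃ m s, (m, s) ∈ AddSubgroup.closure {((n, t) : (Fin D → ℤ) × ℝ), (n, t')} ∧ m ≠ 0 ∧
      c * |s| < l1 m := by
  set Δ := t - t'
  have hΔ : Δ ≠ 0 := sub_ne_zero.2 htt'
  obtain ⟨M, hM⟩ := exists_nat_gt (|c| * |Δ| / l1 n)
  rw [div_lt_iff₀ (l1_pos hn)] at hM
  have hM0 : M ≠ 0 := by
    rintro rfl
    simp only [Nat.cast_zero, zero_mul] at hM
    exact hM.not_ge (by positivity)
  set k := round (M * t' / Δ)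
  have hmem : ((M • n, M * t' - k * Δ) : (Fin D → ℤ) × ℝ) =
      M • (n, t') - k • ((n, t) - (n, t')) := by
    ext <;> simp [Δ]
  have hs : |(M : ℝ) * t' - k * Δ| ≤ |Δ| := by
    have hround := abs_sub_round ((M : ℝ) * t' / Δ)
    calc |(M : ℝ) * t' - k * Δ| = |M * t' / Δ - k| * |Δ| := by
          rw [← abs_mul, sub_mul, div_mul_cancel₀ _ hΔ]
      _ ≤ |Δ| := mul_le_of_le_one_left (abs_nonneg _) (by linarith)
  refine ⟨M • n, M * t' - k * Δ, ?_, smul_ne_zero hM0 hn, ?_⟩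
  · rw [hmem]
    exact sub_mem (nsmul_mem (AddSubgroup.subset_closure (by simp)) _)
      (zsmul_mem (sub_mem (AddSubgroup.subset_closure (by simp))
        (AddSubgroup.subset_closure (by simp))) _)
  · calc c * |(M : ℝ) * t' - k * Δ| ≤ |c| * |Δ| :=
          (mul_le_mul_of_nonneg_right (le_abs_self c) (abs_nonneg _)).trans
            (mul_le_mul_of_nonneg_left hs (abs_nonneg c))
      _ < M * l1 n := hM
      _ = l1 (M • n) := (l1_nsmul M n).symm

theorem inner_eq_zero_of_apply_eq_self {𝕜 E : Type*} [RCLike 𝕜] [NormedAddCommGroup E]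
    [InnerProductSpace 𝕜 E] [CompleteSpace E] {U : (Fin D → ℤ) × ℝ → E ≃ₗᵢ[𝕜] E}
    (hU : ∀ p q, U (p + q) = (U q).trans (U p)) {Ω : E} {vc : ℝ}
    (hSL : ∀ (m : Fin D → ℤ) (t : ℝ), m ≠ 0 → vc * |t| < l1 m →
      ∀ ψ : E, U (m, t) ψ = ψ → ∃ c : 𝕜, ψ = c • Ω)
    {n : Fin D → ℤ} (hn : n ≠ 0) {t t' : ℝ} (htt' : t ≠ t') {ψ φ : E} (hψΩ : ⟪Ω, ψ⟫_𝕜 = 0)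
    (hψ : U (n, t) ψ = ψ) (hφ : U (n, t') φ = φ) : ⟪ψ, φ⟫_𝕜 = 0 := by
  obtain ⟨Q, hQ, hψQ⟩ := UnitaryRep.exists_closure_le_stabilizer_inner_eq hU hψ hφ
  obtain ⟨m, s, hms, hm, hspacelike⟩ := exists_mem_closure_pair_ne_zero_mul_abs_lt_l1 hn htt' vc
  obtain ⟨c, rfl⟩ := hSL m s hm hspacelike Q (hQ hms)
  rw [← hψQ, inner_smul_right, inner_eq_zero_symm.1 hψΩ, mul_zero]

theorem projection_theorem_general
    (U : (Fin D → ℤ) × ℝ → H ≃ₗᵢ[ℂ] H)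
    (hUadd : ∀ p q : (Fin D → ℤ) × ℝ, U (p + q) = (U q).trans (U p))
    (Ω : H) (hΩinv : ∀ p, U p Ω = Ω)
    (vc : ℝ)
    (hSL : ∀ (m : Fin D → ℤ) (t : ℝ), m ≠ 0 → vc * |t| < l1 m →
      ∀ ψ : H, U (m, t) ψ = ψ → ∃ c : ℂ, ψ = c • Ω)
    (n : Fin D → ℤ) (hn : n ≠ 0) :
    Set.Countable
      {v : ℝ | v ≠ 0 ∧ ∃ ψ : H, ψ ≠ 0 ∧ (inner ℂ Ω ψ : ℂ) = 0 ∧ U (n, l1 n / v) ψ = ψ} ∧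
    volume
      {v : ℝ | v ≠ 0 ∧ ∃ ψ : H, ψ ≠ 0 ∧ (inner ℂ Ω ψ : ℂ) = 0 ∧ U (n, l1 n / v) ψ = ψ} = 0 ∧
    ∃ E : Set ℝ, volume E = 0 ∧ ∀ v : ℝ, v ∉ E →
      {ψ : H | U (n, l1 n / v) ψ = ψ} = {ψ : H | ∃ c : ℂ, ψ = c • Ω} := by
  set V : ℝ → Submodule ℂ H := fun t => (ℂ ∙ Ω)ᗮ ⊓ LinearMap.eqLocus (U (n, t) : H →ₗ[ℂ] H) 1
  have hV : Pairwise fun t t' => V t ⟂ V t' := fun t t' htt' =>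
    Submodule.isOrtho_iff_inner_eq.2 fun ψ hψ φ hφ =>
      inner_eq_zero_of_apply_eq_self hUadd hSL hn htt'
        (Submodule.mem_orthogonal_singleton_iff_inner_right.1 hψ.1) hψ.2 hφ.2
  set E := (l1 n / ·) ⁻¹' {t | V t ≠ ⊥}
  have hE : E.Countable := (Submodule.countable_setOf_ne_bot_of_pairwise_isOrtho hV).preimage
    (Function.LeftInverse.injective fun v => div_div_cancel₀ (l1_pos hn).ne')
  have hBE :
      {v : ℝ | v ≠ 0 ∧ ∃ ψ : H, ψ ≠ 0 ∧ (inner ℂ Ω ψ : ℂ) = 0 ∧ U (n, l1 n / v) ψ = ψ} ⊆ E :=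
    fun v ⟨_, ψ, hψ0, hψΩ, hψ⟩ => (Submodule.ne_bot_iff _).2
      ⟨ψ, ⟨Submodule.mem_orthogonal_singleton_iff_inner_right.2 hψΩ, hψ⟩, hψ0⟩
  refine ⟨hE.mono hBE, (hE.mono hBE).measure_zero _, E, hE.measure_zero _, fun v hv => ?_⟩
  have hfix := Submodule.eq_of_le_of_orthogonal_inf_eq_bot
    ((Submodule.span_singleton_le_iff_mem _ _).2 (hΩinv (n, l1 n / v))) (not_not.1 hv)
  ext ψ
  simpa [eq_comm, Submodule.mem_span_singleton] using SetLike.ext_iff.1 hfix ψ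

/-- **Projection Theorem** (Theorem 3.2, Hilbert-space form): under Hypothesis (SL), for each
`n ≠ 0` the set of bad speeds is countable, hence Lebesgue-null, so for almost every `v` the
`U (n, ‖n‖₁/v)`-invariant subspace consists exactly of the scalar multiples of `Ω`. -/
theorem projection_theorem
    (U : (Fin D → ℤ) × ℝ → H ≃ₗᵢ[ℂ] H)
    (hU0 : U 0 = LinearIsometryEquiv.refl ℂ H)
    (hUadd : ∀ p q : (Fin D → ℤ) × ℝ, U (p + q) = (U q).trans (U p))
    (Ω : H) (hΩ : ‖Ω‖ = 1) (hΩinv : ∀ p, U p Ω = Ω)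
    (vc : ℝ) (hvc : 0 < vc)
    (hSL : ∀ (m : Fin D → ℤ) (t : ℝ), m ≠ 0 → vc * |t| < l1 m →
      ∀ ψ : H, U (m, t) ψ = ψ → ∃ c : ℂ, ψ = c • Ω)
    (n : Fin D → ℤ) (hn : n ≠ 0) :
    Set.Countable
      {v : ℝ | v ≠ 0 ∧ ∃ ψ : H, ψ ≠ 0 ∧ (inner ℂ Ω ψ : ℂ) = 0 ∧ U (n, l1 n / v) ψ = ψ} ∧
    volume
      {v : ℝ | v ≠ 0 ∧ ∃ ψ : H, ψ ≠ 0 ∧ (inner ℂ Ω ψ : ℂ) = 0 ∧ U (n, l1 n / v) ψ = ψ} = 0 ∧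
    ∃ E : Set ℝ, volume E = 0 ∧ ∀ v : ℝ, v ∉ E →
      {ψ : H | U (n, l1 n / v) ψ = ψ} = {ψ : H | ∃ c : ℂ, ψ = c • Ω} :=
  projection_theorem_general U hUadd Ω hΩinv vc hSL n hn
end

section
/- Null set of resonant wavenumber–frequency pairs (core of Theorem 3.13). Let H be a separable complex Hilbert space and V a unitary operator on H. Let n ∈ ℤ^D (ℤ^D = Fin D → ℤ) and c ∈ ℝ with (n, c) ≠ (0, 0). Then the set { (k, f) ∈ ℝ^D × ℝ : there exists ψ ∈ H, ψ ≠ 0, with Vψ = e^{i(k·n − f·c)}·ψ } has Lebesgue measure zero in ℝ^D × ℝ ≅ ℝ^{D+1} (here k·n = Σᵢ kᵢnᵢ). -/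
open Filter MeasureTheory Topology
open scoped InnerProductSpace

section Aux

variable {H : Type*} [NormedAddCommGroup H] [InnerProductSpace ℂ H]

/-- Eigenvalue set of a unitary on a separable space is countable. -/
lemma countable_eigenvalues [TopologicalSpace.SeparableSpace H] (V : H ≃ₗᵢ[ℂ] H) :
    Set.Countable {l : ℂ | ∃ ψ : H, ψ ≠ 0 ∧ V ψ = l • ψ} := by
  classical
  set Λ : Set ℂ := {l : ℂ | ∃ ψ : H, ψ ≠ 0 ∧ V ψ = l • ψ} with hΛdef
  choose! ψ hψ0 hψV using fun l (hl : l ∈ Λ) => hl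
  set u : ℂ → H := fun l => (‖ψ l‖ : ℂ)⁻¹ • ψ l with hu
  have hu0 : ∀ l ∈ Λ, ‖u l‖ = 1 := by
    intro l hl
    have h0 : ψ l ≠ 0 := hψ0 l hl
    simp only [hu, norm_smul, norm_inv, Complex.norm_real, Real.norm_eq_abs,
      abs_of_nonneg (norm_nonneg _)]
    rw [inv_mul_cancel₀ (norm_ne_zero_iff.2 h0)]
  have huV : ∀ l ∈ Λ, V (u l) = l • u l := by
    intro l hl
    show V ((‖ψ l‖ : ℂ)⁻¹ • ψ l) = l • (‖ψ l‖ : ℂ)⁻¹ • ψ l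
    rw [V.map_smul, hψV l hl, smul_comm]
  have horth : ∀ l ∈ Λ, ∀ m ∈ Λ, l ≠ m → ⟪u l, u m⟫_ℂ = 0 := by
    intro l hl m hm hlm
    have habs : ‖l‖ = 1 := by
      have h := V.norm_map (u l)
      rw [huV l hl, norm_smul, hu0 l hl] at h
      simpa using h
    have hl0 : (starRingEnd ℂ) l ≠ 0 := by
      simp only [ne_eq, map_eq_zero]
      intro h; rw [h] at habs; simp at habs
    have key : (starRingEnd ℂ) l * m * ⟪u l, u m⟫_ℂ = ⟪u l, u m⟫_ℂ := by
      have h := V.inner_map_map (u l) (u m)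
      rw [huV l hl, huV m hm, inner_smul_left, inner_smul_right] at h
      rw [mul_assoc]; exact h
    by_contra hne
    have h1 : (starRingEnd ℂ) l * m = 1 := by
      have := mul_right_cancel₀ hne (key.trans (one_mul _).symm)
      exact this
    have h2 : (starRingEnd ℂ) l * l = 1 := by
      rw [Complex.conj_mul', habs]
      norm_num
    exact hlm (mul_left_cancel₀ hl0 (h1.trans h2.symm)).symm
  have hdist : ∀ l ∈ Λ, ∀ m ∈ Λ, l ≠ m → 1 ≤ dist (u l) (u m) := by
    intro l hl m hm hlm
    have hsq : ‖u l - u m‖ ^ 2 = 2 := by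
      have := @norm_sub_sq ℂ _ _ _ _ (u l) (u m)
      rw [horth l hl m hm hlm] at this
      rw [this, hu0 l hl, hu0 m hm]
      norm_num
    rw [dist_eq_norm]
    nlinarith [norm_nonneg (u l - u m)]
  apply Set.PairwiseDisjoint.countable_of_isOpen
    (s := fun l => Metric.ball (u l) (1/2))
  · intro l hl m hm hlm
    simp only [Function.onFun, Set.disjoint_left]
    intro x hx hy
    simp only [Metric.mem_ball] at hx hy
    have := hdist l hl m hm hlm
    have htri := dist_triangle (u l) x (u m)
    rw [dist_comm (u l) x] at htri
    linarith
  · intro l _; exact Metric.isOpen_ball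
  · intro l _; exact ⟨u l, by simp⟩

/-- The set of real angles whose exponential is an eigenvalue is countable. -/
lemma countable_angles [TopologicalSpace.SeparableSpace H] (V : H ≃ₗᵢ[ℂ] H) :
    Set.Countable {θ : ℝ | ∃ ψ : H, ψ ≠ 0 ∧
      V ψ = Complex.exp (Complex.I * (θ : ℂ)) • ψ} := by
  classical
  have hΛ := countable_eigenvalues V
  have fiber : ∀ l : ℂ, Set.Countable {θ : ℝ | Complex.exp (Complex.I * (θ : ℂ)) = l} := by
    intro l
    set F := {θ : ℝ | Complex.exp (Complex.I * (θ : ℂ)) = l} with hF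
    rcases Set.eq_empty_or_nonempty F with h | ⟨θ₀, hθ₀⟩
    · simp [h]
    · apply Set.Countable.mono _ (Set.countable_range fun k : ℤ => θ₀ + 2 * Real.pi * k)
      intro θ hθ
      have hexp : Complex.exp (Complex.I * (θ : ℂ)) = Complex.exp (Complex.I * (θ₀ : ℂ)) :=
        hθ.trans hθ₀.symm
      rw [Complex.exp_eq_exp_iff_exists_int] at hexp
      obtain ⟨k, hk⟩ := hexp
      refine ⟨k, ?_⟩
      have him := congrArg Complex.im hk
      simp [Complex.add_im, Complex.mul_im] at him
      push_cast
      linarith [him]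
  have : {θ : ℝ | ∃ ψ : H, ψ ≠ 0 ∧ V ψ = Complex.exp (Complex.I * (θ : ℂ)) • ψ} ⊆
      ⋃ l ∈ {l : ℂ | ∃ ψ : H, ψ ≠ 0 ∧ V ψ = l • ψ},
        {θ : ℝ | Complex.exp (Complex.I * (θ : ℂ)) = l} := by
    intro θ hθ
    exact Set.mem_biUnion hθ rfl
  exact Set.Countable.mono this (hΛ.biUnion fun l _ => fiber l)

end Aux

/-- The level sets of a nontrivial affine functional `(k, f) ↦ k·n - f·c` are null. -/
lemma level_set_null {D : ℕ} (n : Fin D → ℤ) (c : ℝ) (hnc : ¬(n = 0 ∧ c = 0)) (θ : ℝ) :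
    volume {p : (Fin D → ℝ) × ℝ | (∑ i, p.1 i * (n i : ℝ)) - p.2 * c = θ} = 0 := by
  classical
  set L : ((Fin D → ℝ) × ℝ) →ₗ[ℝ] ℝ :=
    { toFun := fun p => (∑ i, p.1 i * (n i : ℝ)) - p.2 * c
      map_add' := by
        intro p q
        simp only [Prod.fst_add, Prod.snd_add, Pi.add_apply, add_mul, Finset.sum_add_distrib]
        ring
      map_smul' := by
        intro r p
        simp only [Prod.smul_fst, Prod.smul_snd, Pi.smul_apply, smul_eq_mul, RingHom.id_apply,
          mul_sub, Finset.mul_sum, mul_assoc] } with hLdef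
  have hker : LinearMap.ker L ≠ ⊤ := by
    intro htop
    have hmem : ∀ p, L p = 0 := fun p => by
      have : p ∈ LinearMap.ker L := htop ▸ Submodule.mem_top
      exact this
    by_cases hn : n = 0
    · have hc : c ≠ 0 := fun hc => hnc ⟨hn, hc⟩
      have := hmem (0, 1)
      simp [hLdef] at this
      exact hc this
    · obtain ⟨i, hi⟩ := Function.ne_iff.mp hn
      have := hmem (Pi.single i 1, 0)
      simp only [hLdef, LinearMap.coe_mk, AddHom.coe_mk, zero_mul, sub_zero] at this
      rw [Finset.sum_eq_single i (fun j _ hj => by simp [Pi.single_apply, hj])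
        (fun h => absurd (Finset.mem_univ i) h)] at this
      simp at this
      exact hi (by exact_mod_cast this)
  rcases Set.eq_empty_or_nonempty {p : (Fin D → ℝ) × ℝ | L p = θ} with h | ⟨p₀, hp₀⟩
  · have : {p : (Fin D → ℝ) × ℝ | (∑ i, p.1 i * (n i : ℝ)) - p.2 * c = θ} = ∅ := h
    rw [this]; simp
  · have heq : {p : (Fin D → ℝ) × ℝ | (∑ i, p.1 i * (n i : ℝ)) - p.2 * c = θ} =
        (fun x => -p₀ + x) ⁻¹' (LinearMap.ker L : Set ((Fin D → ℝ) × ℝ)) := by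
      ext p
      simp only [Set.mem_setOf_eq, Set.mem_preimage, SetLike.mem_coe, LinearMap.mem_ker,
        map_add, map_neg]
      have hp₀' : L p₀ = θ := hp₀
      constructor
      · intro h; have : L p = θ := h; rw [this, hp₀']; ring
      · intro h
        have : L p = L p₀ := by linarith [h]
        rw [hp₀'] at this; exact this
    rw [heq, Measure.volume_eq_prod, measure_preimage_add]
    exact Measure.addHaar_submodule _ _ hker

/-- **Null set of resonant wavenumber–frequency pairs** (core of Theorem 3.13): for a unitary
`V` on a separable complex Hilbert space and `(n, c) ≠ (0, 0)`, the set of pairs `(k, f)` such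
that `e^{i(k·n − f·c)}` is an eigenvalue of `V` has Lebesgue measure zero in `ℝ^D × ℝ`. -/
theorem resonant_pairs_null {D : ℕ} {H : Type*} [NormedAddCommGroup H]
    [InnerProductSpace ℂ H] [CompleteSpace H] [TopologicalSpace.SeparableSpace H]
    (V : H ≃ₗᵢ[ℂ] H) (n : Fin D → ℤ) (c : ℝ) (hnc : ¬(n = 0 ∧ c = 0)) :
    volume {p : (Fin D → ℝ) × ℝ | ∃ ψ : H, ψ ≠ 0 ∧
      V ψ = Complex.exp (Complex.I * ((((∑ i, p.1 i * (n i : ℝ)) - p.2 * c) : ℝ) : ℂ)) • ψ} = 0 := by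
  classical
  set S : Set ℝ := {θ : ℝ | ∃ ψ : H, ψ ≠ 0 ∧
    V ψ = Complex.exp (Complex.I * (θ : ℂ)) • ψ} with hS
  have hSc : S.Countable := countable_angles V
  have hsub : {p : (Fin D → ℝ) × ℝ | ∃ ψ : H, ψ ≠ 0 ∧
      V ψ = Complex.exp (Complex.I * ((((∑ i, p.1 i * (n i : ℝ)) - p.2 * c) : ℝ) : ℂ)) • ψ} ⊆
      ⋃ θ ∈ S, {p : (Fin D → ℝ) × ℝ | (∑ i, p.1 i * (n i : ℝ)) - p.2 * c = θ} := by
    intro p hp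
    exact Set.mem_biUnion hp rfl
  exact measure_mono_null hsub
    ((measure_biUnion_null_iff hSc).2 fun θ _ => level_set_null n c hnc θ)
end
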